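/- If T is a tree and v is a strong support vertex of T (a vertex with at least two leaf neighbors), with leaf neighbors v₁ and v₂, then subdividing the two edges vv₁ and vv₂ strictly increases the total domination number; consequently sd_{γ_t}(T) ≤ 2. -/

import Mathlib

/-!
Let `w₁, w₂` be the vertices subdividing `vv₁, vv₂`. A minimum total dominating set `S'` of the
subdivided tree must contain `w₁` and `w₂`, the only neighbours of the leaves `v₁, v₂`, and it must
contain `v` or `v₁` to dominate `w₁`. Dropping `w₁, w₂` from `S'` and adding `v, v₁` therefore costs
at most one new vertex, and yields a total dominating set of `T`, so `γ_t(T) ≤ γ_t(T') - 1`.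
-/

open SimpleGraph

variable {V : Type*}

/-- `S` is a total dominating set of `G`. -/
def IsTotalDomSet (G : SimpleGraph V) (S : Set V) : Prop :=
  ∀ v : V, ∃ u ∈ S, G.Adj v u

/-- The total domination number. -/
noncomputable def gammaT (G : SimpleGraph V) [Fintype V] : ℕ :=
  sInf {n | ∃ S : Finset V, S.card = n ∧ IsTotalDomSet G ↑S}

/-- The graph obtained from `G` by subdividing each edge in `F` once. -/
def subdivide (G : SimpleGraph V) (F : Finset (Sym2 V)) :
    SimpleGraph (V ⊕ {e : Sym2 V // e ∈ F}) where
  Adj x y :=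
    match x, y with
    | Sum.inl u, Sum.inl v => G.Adj u v ∧ s(u, v) ∉ F
    | Sum.inl u, Sum.inr e => u ∈ e.1
    | Sum.inr e, Sum.inl u => u ∈ e.1
    | Sum.inr _, Sum.inr _ => False
  symm := by
    refine ⟨?_⟩
    rintro (u | e) (v | f) h
    · exact ⟨h.1.symm, by rw [Sym2.eq_swap]; exact h.2⟩
    · exact h
    · exact h
    · exact h
  loopless := by
    refine ⟨?_⟩
    rintro (u | e) h
    · exact G.irrefl h.1
    · exact h

/-- The total domination subdivision number. -/
noncomputable def sdGammaT (G : SimpleGraph V) [Fintype V] [DecidableEq V] : ℕ :=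
  sInf {k | ∃ F : Finset (Sym2 V), ↑F ⊆ G.edgeSet ∧ F.card = k ∧
    gammaT G < gammaT (subdivide G F)}

def IsLeaf (G : SimpleGraph V) (v : V) : Prop := ∃! u, G.Adj v u

def IsSupport (G : SimpleGraph V) (v : V) : Prop := ∃ u, G.Adj v u ∧ IsLeaf G u

def IsWeakSupport (G : SimpleGraph V) (v : V) : Prop := ∃! u, G.Adj v u ∧ IsLeaf G u

def IsStrongSupport (G : SimpleGraph V) (v : V) : Prop :=
  ∃ u w, u ≠ w ∧ G.Adj v u ∧ G.Adj v w ∧ IsLeaf G u ∧ IsLeaf G w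

def Is2Packing (G : SimpleGraph V) (S : Set V) : Prop :=
  ∀ u ∈ S, ∀ v ∈ S, u ≠ v → 3 ≤ G.dist u v

noncomputable def packingNumber (G : SimpleGraph V) [Fintype V] : ℕ :=
  sSup {n | ∃ S : Finset V, S.card = n ∧ Is2Packing G ↑S}

def IsPendantEdge (G : SimpleGraph V) (e : Sym2 V) : Prop :=
  ∃ u v, e = s(u, v) ∧ G.Adj u v ∧ IsLeaf G u

/-- Distance between two edges. -/
noncomputable def edgeDist (G : SimpleGraph V) (e f : Sym2 V) : ℕ :=
  sInf {n | ∃ u ∈ e, ∃ v ∈ f, G.dist u v = n}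

/-- Distance from an edge to a set of edges. -/
noncomputable def edistToSet (G : SimpleGraph V) (e : Sym2 V) (F : Set (Sym2 V)) : ℕ :=
  sInf {n | ∃ f ∈ F, edgeDist G e f = n}

/-- Properties (a), (b), (c) of an edge set `F` in `T`. -/
def PropertyABC (T : SimpleGraph V) (F : Set (Sym2 V)) : Prop :=
  (∀ e, IsPendantEdge T e → e ∈ F) ∧
  (∀ e ∈ F, edistToSet T e (F \ {e}) = 3) ∧
  (∀ e ∈ F, ∀ f ∈ F, e ≠ f →
    ∃! l : List (Sym2 V),
      l.head? = some e ∧ l.getLast? = some f ∧ (∀ x ∈ l, x ∈ F) ∧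
      l.Chain' (fun a b => edgeDist T a b = 3))

section TotalDomination

variable {G : SimpleGraph V} [Fintype V]

lemma IsTotalDomSet.gammaT_le {S : Finset V} (hS : IsTotalDomSet G S) : gammaT G ≤ S.card :=
  Nat.sInf_le ⟨S, rfl, hS⟩

lemma exists_isTotalDomSet_card_eq_gammaT (hG : ∀ x, ∃ y, G.Adj x y) :
    ∃ S : Finset V, IsTotalDomSet G S ∧ S.card = gammaT G := by
  have hne : {n | ∃ S : Finset V, S.card = n ∧ IsTotalDomSet G S}.Nonempty :=
    ⟨_, Finset.univ, rfl, fun x => (hG x).imp fun y hy => ⟨by simp, hy⟩⟩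
  obtain ⟨S, hcard, hS⟩ := Nat.sInf_mem hne
  exact ⟨S, hS, hcard⟩

end TotalDomination

section Subdivide

variable {G : SimpleGraph V} {F : Finset (Sym2 V)}

@[simp]
lemma subdivide_adj_inl_inl {u w : V} :
    (subdivide G F).Adj (.inl u) (.inl w) ↔ G.Adj u w ∧ s(u, w) ∉ F :=
  Iff.rfl

@[simp]
lemma not_subdivide_adj_inr_inr {e f : F} : ¬(subdivide G F).Adj (.inr e) (.inr f) :=
  id

lemma exists_subdivide_adj (hG : ∀ x, ∃ y, G.Adj x y) (x : V ⊕ F) :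
    ∃ y, (subdivide G F).Adj x y := by
  rcases x with x | ⟨e, he⟩
  · obtain ⟨y, hy⟩ := hG x
    by_cases hxy : s(x, y) ∈ F
    · exact ⟨.inr ⟨_, hxy⟩, Sym2.mem_mk_left x y⟩
    · exact ⟨.inl y, hy, hxy⟩
  · induction e using Sym2.ind with
    | h a b => exact ⟨.inl a, Sym2.mem_mk_left a b⟩

lemma eq_inr_of_subdivide_adj_of_isLeaf (hF : ↑F ⊆ G.edgeSet) {u v : V} (hu : IsLeaf G u)
    (hvu : G.Adj v u) (he : s(v, u) ∈ F) {x : V ⊕ F} (hx : (subdivide G F).Adj (.inl u) x) :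
    x = .inr ⟨s(v, u), he⟩ := by
  obtain ⟨w, -, hw⟩ := hu
  have hnbr : ∀ y, G.Adj u y → y = v := fun y hy => (hw y hy).trans (hw v hvu.symm).symm
  rcases x with y | ⟨f, hf⟩
  · obtain ⟨huy, hnot⟩ := subdivide_adj_inl_inl.1 hx
    rw [hnbr y huy, Sym2.eq_swap] at hnot
    exact absurd he hnot
  · have hmem : u ∈ f := hx
    have hf' : s(u, Sym2.Mem.other hmem) = f := Sym2.other_spec hmem
    have hadj : G.Adj u (Sym2.Mem.other hmem) := by
      rw [← mem_edgeSet, hf']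
      exact hF hf
    obtain rfl : f = s(v, u) := by rw [← hf', hnbr _ hadj, Sym2.eq_swap]
    rfl

variable {S : Finset (V ⊕ F)}

lemma IsTotalDomSet.inr_mem_of_isLeaf (hS : IsTotalDomSet (subdivide G F) S)
    (hF : ↑F ⊆ G.edgeSet) {u v : V} (hu : IsLeaf G u) (hvu : G.Adj v u) (he : s(v, u) ∈ F) :
    .inr ⟨s(v, u), he⟩ ∈ S := by
  obtain ⟨x, hx, hadj⟩ := hS (.inl u)
  rwa [← eq_inr_of_subdivide_adj_of_isLeaf hF hu hvu he hadj]

lemma IsTotalDomSet.exists_inl_mem (hS : IsTotalDomSet (subdivide G F) S) (e : F) :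
    ∃ u ∈ e.1, .inl u ∈ S := by
  obtain ⟨x, hx, hadj⟩ := hS (.inr e)
  rcases x with u | f
  · exact ⟨u, hadj, hx⟩
  · exact absurd hadj not_subdivide_adj_inr_inr

lemma IsTotalDomSet.of_subdivide [DecidableEq V] (hS : IsTotalDomSet (subdivide G F) S)
    {D : Finset V} (hD : ∀ e ∈ F, ∀ x ∈ e, ∃ u ∈ D, G.Adj x u) :
    IsTotalDomSet G ↑(S.toLeft ∪ D) := by
  intro x
  by_cases hx : ∃ e ∈ F, x ∈ e
  · obtain ⟨e, he, hxe⟩ := hx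
    obtain ⟨u, hu, hadj⟩ := hD e he x hxe
    exact ⟨u, by simp [hu], hadj⟩
  · obtain ⟨y, hy, hadj⟩ := hS (.inl x)
    rcases y with y | ⟨e, he⟩
    · exact ⟨y, by simpa using Or.inl hy, (subdivide_adj_inl_inl.1 hadj).1⟩
    · exact absurd ⟨e, he, hadj⟩ hx

end Subdivide

lemma Finset.card_union_pair_le {α : Type*} [DecidableEq α] {A : Finset α} {a b : α}
    (h : a ∈ A ∨ b ∈ A) : (A ∪ {a, b}).card ≤ A.card + 1 := by
  rcases h with h | h
  · rw [union_insert, insert_eq_of_mem (mem_union_left _ h), union_singleton]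
    exact card_insert_le b A
  · rw [pair_comm, union_insert, insert_eq_of_mem (mem_union_left _ h), union_singleton]
    exact card_insert_le a A

lemma gammaT_lt_gammaT_subdivide_of_isLeaf [Fintype V] [DecidableEq V] {G : SimpleGraph V}
    (hG : ∀ x, ∃ y, G.Adj x y) {v v₁ v₂ : V} (h12 : v₁ ≠ v₂) (h1 : G.Adj v v₁) (h2 : G.Adj v v₂)
    (hl1 : IsLeaf G v₁) (hl2 : IsLeaf G v₂) :
    gammaT G < gammaT (subdivide G {s(v, v₁), s(v, v₂)}) := by
  set F : Finset (Sym2 V) := {s(v, v₁), s(v, v₂)}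
  have hF : ↑F ⊆ G.edgeSet := by simp [F, Set.insert_subset_iff, h1, h2]
  have he1 : s(v, v₁) ∈ F := by simp [F]
  have he2 : s(v, v₂) ∈ F := by simp [F]
  have he12 : s(v, v₁) ≠ s(v, v₂) := Sym2.congr_right.not.2 h12
  obtain ⟨S, hS, hcard⟩ := exists_isTotalDomSet_card_eq_gammaT (exists_subdivide_adj (F := F) hG)
  have hright : 2 ≤ S.toRight.card := by
    have hsub : {⟨_, he1⟩, ⟨_, he2⟩} ⊆ S.toRight := by
      simp [Finset.insert_subset_iff, hS.inr_mem_of_isLeaf hF hl1 h1 he1,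
        hS.inr_mem_of_isLeaf hF hl2 h2 he2]
    simpa [Finset.card_pair, he12] using Finset.card_le_card hsub
  have hleft : v ∈ S.toLeft ∨ v₁ ∈ S.toLeft := by
    obtain ⟨u, hu, huS⟩ := hS.exists_inl_mem ⟨_, he1⟩
    rcases Sym2.mem_iff.1 hu with rfl | rfl <;> simp [huS]
  have hD : ∀ e ∈ F, ∀ x ∈ e, ∃ u ∈ ({v, v₁} : Finset V), G.Adj x u := by
    simp only [F, Finset.mem_insert, Finset.mem_singleton]
    rintro e (rfl | rfl) x hx <;> rcases Sym2.mem_iff.1 hx with rfl | rfl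
    exacts [⟨v₁, by simp, h1⟩, ⟨v, by simp, h1.symm⟩, ⟨v₁, by simp, h1⟩, ⟨v, by simp, h2.symm⟩]
  calc gammaT G ≤ (S.toLeft ∪ {v, v₁}).card := (hS.of_subdivide hD).gammaT_le
    _ ≤ S.toLeft.card + 1 := Finset.card_union_pair_le hleft
    _ < S.toLeft.card + S.toRight.card := by omega
    _ = gammaT (subdivide G F) := by rw [Finset.card_toLeft_add_card_toRight, hcard]

/-- Subdividing the two pendant edges at a strong support vertex of a tree
increases the total domination number; hence `sd_{γ_t}(T) ≤ 2`. -/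
theorem strong_support_subdivide {V : Type*} [Fintype V] [DecidableEq V]
    (T : SimpleGraph V) (hT : T.IsTree) (v v₁ v₂ : V) (h12 : v₁ ≠ v₂)
    (h1 : T.Adj v v₁) (h2 : T.Adj v v₂) (hl1 : IsLeaf T v₁) (hl2 : IsLeaf T v₂) :
    gammaT T < gammaT (subdivide T {s(v, v₁), s(v, v₂)}) ∧ sdGammaT T ≤ 2 := by
  have : Nontrivial V := ⟨⟨v, v₁, T.ne_of_adj h1⟩⟩
  have hlt := gammaT_lt_gammaT_subdivide_of_isLeaf
    hT.connected.preconnected.exists_adj_of_nontrivial h12 h1 h2 hl1 hl2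
  refine ⟨hlt, Nat.sInf_le ⟨_, ?_, Finset.card_pair (Sym2.congr_right.not.2 h12), hlt⟩⟩
  simp [Set.insert_subset_iff, h1, h2]
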